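/- arXiv:1911.06937 — 3 statements merged into one kernel-verified Lean document; each statement's English description precedes it below -/
import Mathlib

section
/- Let 0 < a < b and define F : [b,∞) → ℝ by F(s) = ∫_b^s (∫_a^t e^{2τ} dτ)^{-1/2} dt + 1. Then F is monotonically increasing, bounded above, and strictly concave (F'' < 0 on (b,∞)). Moreover limsup_{s→∞} F'(s)²/(F(s)|F''(s)|) < ∞ and liminf_{s→∞} F'(s)³(e^{2s}-1)/(F(s)⁴|F''(s)|) > 0. -/
/-!
The inner integral is `(e^{2t} - e^{2a})/2`, which lies below `e^{2t}` and, for `t ≥ b`, above a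
positive multiple of `e^{2t}`; so `F' = (∫_a^s e^{2τ})^{-1/2}` is squeezed between `e^{-s}` and
`K e^{-s}`, and `F` is increasing and bounded. Differentiating once more gives
`F'' = -e^{2s} F'^3 / 2 < 0`, so the two quotients equal `2 / (F e^{2s} F') ≤ 2 e^{-s}` and
`2 (1 - e^{-2s}) / F^4 ≥ 1 / (sup F)^4`.
-/

open Filter Real Set intervalIntegral

theorem HasDerivAt.rpow_neg_half {f : ℝ → ℝ} {f' x : ℝ} (hf : HasDerivAt f f' x)
    (hx : 0 < f x) :
    HasDerivAt (fun y => f y ^ (-(1 : ℝ) / 2)) (-(f' * (f x ^ (-(1 : ℝ) / 2)) ^ 3 / 2)) x := by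
  convert hf.rpow_const (p := -(1 : ℝ) / 2) (Or.inl hx.ne') using 1
  rw [← rpow_natCast, ← rpow_mul hx.le]
  ring_nf

theorem exp_two_mul_rpow_neg_half (t : ℝ) : exp (2 * t) ^ (-(1 : ℝ) / 2) = exp (-t) := by
  rw [← exp_mul]
  ring_nf

namespace ComparisonFunction

noncomputable def innerIntegral (a t : ℝ) : ℝ := ∫ τ in a..t, exp (2 * τ)

noncomputable def integrand (a t : ℝ) : ℝ := innerIntegral a t ^ (-(1 : ℝ) / 2)

noncomputable def comparison (a b s : ℝ) : ℝ := (∫ t in b..s, integrand a t) + 1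

variable {a b s t : ℝ}

theorem innerIntegral_eq (a t : ℝ) : innerIntegral a t = (exp (2 * t) - exp (2 * a)) / 2 := by
  rw [innerIntegral, integral_comp_mul_left (fun τ => exp τ) two_ne_zero, integral_exp,
    smul_eq_mul]
  ring

theorem hasDerivAt_innerIntegral (a t : ℝ) : HasDerivAt (innerIntegral a) (exp (2 * t)) t :=
  ((continuous_const.mul continuous_id).rexp.integral_hasStrictDerivAt a t).hasDerivAt

theorem innerIntegral_pos (ht : a < t) : 0 < innerIntegral a t :=
  intervalIntegral_pos_of_pos ((by fun_prop : Continuous _).intervalIntegrable _ _)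
    (fun _ => exp_pos _) ht

theorem innerIntegral_le_exp (a t : ℝ) : innerIntegral a t ≤ exp (2 * t) := by
  rw [innerIntegral_eq]
  linarith [exp_pos (2 * t), exp_pos (2 * a)]

theorem mul_exp_le_innerIntegral (hbt : b ≤ t) :
    (1 - exp (2 * (a - b))) / 2 * exp (2 * t) ≤ innerIntegral a t := by
  have : exp (2 * a) ≤ exp (2 * (a - b)) * exp (2 * t) := by
    rw [← exp_add]
    exact exp_le_exp.2 (by linarith)
  rw [innerIntegral_eq]
  linarith

theorem integrand_pos (ht : a < t) : 0 < integrand a t :=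
  rpow_pos_of_pos (innerIntegral_pos ht) _

theorem exp_neg_le_integrand (ht : a < t) : exp (-t) ≤ integrand a t := by
  rw [← exp_two_mul_rpow_neg_half]
  exact rpow_le_rpow_of_nonpos (innerIntegral_pos ht) (innerIntegral_le_exp a t) (by norm_num)

theorem exists_integrand_le_mul_exp_neg (hab : a < b) :
    ∃ K, 0 < K ∧ ∀ t, b ≤ t → integrand a t ≤ K * exp (-t) := by
  set c := (1 - exp (2 * (a - b))) / 2
  have hc : 0 < c := by
    have : exp (2 * (a - b)) < 1 := exp_lt_one_iff.2 (by linarith)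
    simp only [c]
    linarith
  refine ⟨c ^ (-(1 : ℝ) / 2), by positivity, fun t hbt => ?_⟩
  rw [← exp_two_mul_rpow_neg_half, ← mul_rpow hc.le (exp_pos _).le]
  exact rpow_le_rpow_of_nonpos (by positivity) (mul_exp_le_innerIntegral hbt) (by norm_num)

theorem hasDerivAt_integrand (ht : a < t) :
    HasDerivAt (integrand a) (-(exp (2 * t) * integrand a t ^ 3 / 2)) t :=
  (hasDerivAt_innerIntegral a t).rpow_neg_half (innerIntegral_pos ht)

theorem continuousOn_integrand (a : ℝ) : ContinuousOn (integrand a) (Ioi a) :=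
  fun _ ht => (hasDerivAt_integrand ht).continuousAt.continuousWithinAt

theorem intervalIntegrable_integrand (hab : a < b) (hs : a < s) :
    IntervalIntegrable (integrand a) MeasureTheory.volume b s :=
  ((continuousOn_integrand a).mono (ordConnected_Ioi.uIcc_subset hab hs)).intervalIntegrable

theorem hasDerivAt_comparison (hab : a < b) (hs : a < s) :
    HasDerivAt (comparison a b) (integrand a s) s :=
  (integral_hasDerivAt_right (intervalIntegrable_integrand hab hs)
    ((continuousOn_integrand a).stronglyMeasurableAtFilter isOpen_Ioi s hs)
    (hasDerivAt_integrand hs).continuousAt).add_const 1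

theorem deriv_comparison (hab : a < b) (hs : a < s) : deriv (comparison a b) s = integrand a s :=
  (hasDerivAt_comparison hab hs).deriv

theorem deriv_deriv_comparison (hab : a < b) (hs : a < s) :
    deriv (deriv (comparison a b)) s = -(exp (2 * s) * integrand a s ^ 3 / 2) := by
  have : deriv (comparison a b) =ᶠ[nhds s] integrand a :=
    eventually_of_mem (isOpen_Ioi.mem_nhds hs) fun _ => deriv_comparison hab
  rw [this.deriv_eq, (hasDerivAt_integrand hs).deriv]

theorem deriv_deriv_comparison_neg (hab : a < b) (hs : a < s) :
    deriv (deriv (comparison a b)) s < 0 := by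
  have := integrand_pos hs
  rw [deriv_deriv_comparison hab hs, neg_lt_zero]
  positivity

theorem strictMonoOn_comparison (hab : a < b) : StrictMonoOn (comparison a b) (Ici b) := by
  refine strictMonoOn_of_deriv_pos (convex_Ici b) (fun s hs => ?_) fun s hs => ?_
  · exact (hasDerivAt_comparison hab (hab.trans_le hs)).continuousAt.continuousWithinAt
  · rw [interior_Ici] at hs
    rw [deriv_comparison hab (hab.trans hs)]
    exact integrand_pos (hab.trans hs)

theorem comparison_self (a b : ℝ) : comparison a b b = 1 := by
  simp [comparison]

theorem one_le_comparison (hab : a < b) (hs : b ≤ s) : 1 ≤ comparison a b s :=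
  comparison_self a b ▸ (strictMonoOn_comparison hab).monotoneOn self_mem_Ici hs hs

theorem bddAbove_comparison (hab : a < b) : BddAbove (comparison a b '' Ici b) := by
  obtain ⟨K, hK0, hK⟩ := exists_integrand_le_mul_exp_neg hab
  refine ⟨K * exp (-b) + 1, ?_⟩
  rintro _ ⟨s, hs : b ≤ s, rfl⟩
  have hint : ∫ t in b..s, integrand a t ≤ ∫ t in b..s, K * exp (-t) :=
    integral_mono_on hs (intervalIntegrable_integrand hab (hab.trans_le hs))
      ((by fun_prop : Continuous _).intervalIntegrable _ _) fun t ht => hK t ht.1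
  rw [integral_const_mul, integral_comp_neg (fun t => exp t), integral_exp] at hint
  have : 0 ≤ K * exp (-s) := by positivity
  simp only [comparison]
  linarith

theorem deriv_sq_div_le_two (hab : a < b) (hs : max b 0 ≤ s) :
    deriv (comparison a b) s ^ 2 /
      (comparison a b s * |deriv (deriv (comparison a b)) s|) ≤ 2 := by
  have has : a < s := hab.trans_le (le_of_max_le_left hs)
  have hh := integrand_pos has
  have hF := one_le_comparison hab (le_of_max_le_left hs)
  have hEh : 1 ≤ exp (2 * s) * integrand a s := calc
    1 ≤ exp s := one_le_exp (le_of_max_le_right hs)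
    _ = exp (2 * s) * exp (-s) := by rw [← exp_add]; ring_nf
    _ ≤ _ := mul_le_mul_of_nonneg_left (exp_neg_le_integrand has) (exp_pos _).le
  rw [deriv_comparison hab has, deriv_deriv_comparison hab has, abs_neg,
    abs_of_pos (by positivity), div_le_iff₀ (by positivity)]
  calc integrand a s ^ 2 = 1 * 1 * integrand a s ^ 2 := by ring
    _ ≤ comparison a b s * (exp (2 * s) * integrand a s) * integrand a s ^ 2 := by gcongr
    _ = _ := by ring

theorem one_div_pow_four_le_deriv_cube_mul_div (hab : a < b) {M : ℝ}
    (hM : ∀ s, b ≤ s → comparison a b s ≤ M) (hs : max b 1 ≤ s) :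
    1 / M ^ 4 ≤ deriv (comparison a b) s ^ 3 * (exp (2 * s) - 1) /
      (comparison a b s ^ 4 * |deriv (deriv (comparison a b)) s|) := by
  have has : a < s := hab.trans_le (le_of_max_le_left hs)
  have hh := integrand_pos has
  have hF := one_le_comparison hab (le_of_max_le_left hs)
  have hE : 2 ≤ exp (2 * s) := by
    linarith [add_one_le_exp (2 * s), le_of_max_le_right hs]
  have hratio : 1 ≤ 2 * (exp (2 * s) - 1) / exp (2 * s) := by
    rw [le_div_iff₀ (by positivity)]
    linarith
  rw [deriv_comparison hab has, deriv_deriv_comparison hab has, abs_neg,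
    abs_of_pos (by positivity)]
  calc 1 / M ^ 4 ≤ 1 / comparison a b s ^ 4 := by
        gcongr
        exact hM s (le_of_max_le_left hs)
    _ ≤ 2 * (exp (2 * s) - 1) / exp (2 * s) / comparison a b s ^ 4 := by gcongr
    _ = _ := by field_simp

end ComparisonFunction

open ComparisonFunction in
theorem comparison_function_properties_general (a b : ℝ) (hab : a < b) :
    let F : ℝ → ℝ := fun s =>
      (∫ t in b..s, (∫ τ in a..t, Real.exp (2 * τ)) ^ (-(1 : ℝ) / 2)) + 1
    StrictMonoOn F (Set.Ici b) ∧
    BddAbove (F '' Set.Ici b) ∧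
    (∀ s ∈ Set.Ioi b, deriv (deriv F) s < 0) ∧
    (∃ C : ℝ, ∀ᶠ s in atTop,
      (deriv F s) ^ 2 / (F s * |deriv (deriv F) s|) ≤ C) ∧
    (∃ c : ℝ, 0 < c ∧ ∀ᶠ s in atTop,
      c ≤ (deriv F s) ^ 3 * (Real.exp (2 * s) - 1) / (F s ^ 4 * |deriv (deriv F) s|)) := by
  intro F
  obtain ⟨M, hM⟩ := bddAbove_comparison hab
  have hFM : ∀ s, b ≤ s → comparison a b s ≤ M := fun s hs => hM ⟨s, hs, rfl⟩
  have hM0 : 0 < M := one_pos.trans_le ((one_le_comparison hab le_rfl).trans (hFM b le_rfl))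
  exact ⟨strictMonoOn_comparison hab, bddAbove_comparison hab,
    fun s hs => deriv_deriv_comparison_neg hab (hab.trans hs),
    ⟨2, (eventually_ge_atTop (max b 0)).mono fun s => deriv_sq_div_le_two hab⟩,
    ⟨1 / M ^ 4, by positivity, (eventually_ge_atTop (max b 1)).mono
      fun s => one_div_pow_four_le_deriv_cube_mul_div hab hFM⟩⟩

/-- Properties of the comparison function
`F(s) = ∫_b^s (∫_a^t e^{2τ} dτ)^{-1/2} dt + 1` for `0 < a < b`: `F` is strictly
increasing on `[b,∞)`, bounded above, strictly concave (`F'' < 0` on `(b,∞)`), and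
moreover `limsup_{s→∞} F'(s)²/(F(s)|F''(s)|) < ∞` and
`liminf_{s→∞} F'(s)³(e^{2s}-1)/(F(s)⁴|F''(s)|) > 0`. -/
theorem comparison_function_properties (a b : ℝ) (ha : 0 < a) (hab : a < b) :
    let F : ℝ → ℝ := fun s =>
      (∫ t in b..s, (∫ τ in a..t, Real.exp (2 * τ)) ^ (-(1 : ℝ) / 2)) + 1
    StrictMonoOn F (Set.Ici b) ∧
    BddAbove (F '' Set.Ici b) ∧
    (∀ s ∈ Set.Ioi b, deriv (deriv F) s < 0) ∧
    (∃ C : ℝ, ∀ᶠ s in atTop,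
      (deriv F s) ^ 2 / (F s * |deriv (deriv F) s|) ≤ C) ∧
    (∃ c : ℝ, 0 < c ∧ ∀ᶠ s in atTop,
      c ≤ (deriv F s) ^ 3 * (Real.exp (2 * s) - 1) / (F s ^ 4 * |deriv (deriv F) s|)) :=
  comparison_function_properties_general a b hab
end

section
/- Let u be a real C² function on a domain V ⊆ ℂ with u ≤ 0 and Δu ≥ A·u for some constant A > 0. Then either u ≡ 0 on V or u < 0 everywhere on V. -/
/-!
The zero set of `u` is relatively closed in `V`; it is also open, by Hopf's boundary point lemma.
If `u` vanished at `z₀` but not at a nearby `z`, the zero `p` of `u` nearest to `z` would lie on a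
sphere `∂B(z, R)` with `u < 0` inside. For `α` large the Gaussian `G = exp(-α|w - z|²)` satisfies
`ΔG > A G` on the annulus `R/2 ≤ |w - z| ≤ R`, so `v = u + εG` has `Δv > 0` wherever `v > 0`
there; with `ε` fitted to the inner sphere, the weak maximum principle makes `p` a maximum of `v`
over the annulus. Hence the inward derivative of `v` at `p` is `≤ 0` and that of `u` is `< 0`,
contradicting `∇u(p) = 0` at the interior maximum `p` of `u ≤ 0`.
-/

/-- The Euclidean Laplacian of a function `u : ℂ → ℝ`:
`Δu = ∂²u/∂x² + ∂²u/∂y²`. -/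
noncomputable def laplacian (u : ℂ → ℝ) (z : ℂ) : ℝ :=
  fderiv ℝ (fun w => fderiv ℝ u w 1) z 1 +
    fderiv ℝ (fun w => fderiv ℝ u w Complex.I) z Complex.I

open Filter Topology Set Metric

theorem IsLocalMax.deriv_deriv_nonpos {g : ℝ → ℝ} {x : ℝ} (h : IsLocalMax g x)
    (hc : ContinuousAt g x) : deriv (deriv g) x ≤ 0 := by
  by_contra! hpos
  have hmin : IsLocalMin g x := isLocalMin_of_deriv_deriv_pos hpos h.deriv_eq_zero hc
  have hconst : g =ᶠ[𝓝 x] fun _ => g x :=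
    (Eventually.and h hmin).mono fun y hy => le_antisymm hy.1 hy.2
  simp [hconst.deriv.deriv_eq] at hpos

section SecondDerivative

variable {E : Type*} [NormedAddCommGroup E] [NormedSpace ℝ E]

theorem IsLocalMax.fderiv_fderiv_apply_nonpos {v : E → ℝ} {z : E} (h : IsLocalMax v z)
    (hv : ContDiffAt ℝ 2 v z) (e : E) : fderiv ℝ (fun w => fderiv ℝ v w e) z e ≤ 0 := by
  have hline : ∀ t : ℝ, HasDerivAt (fun s : ℝ => z + s • e) e t := fun t => by
    simpa using ((hasDerivAt_id t).smul_const e).const_add z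
  have hline0 : Tendsto (fun s : ℝ => z + s • e) (𝓝 0) (𝓝 z) := by
    simpa using (hline 0).continuousAt.tendsto
  have hderiv : deriv (fun t : ℝ => v (z + t • e)) =ᶠ[𝓝 0]
      fun t => fderiv ℝ v (z + t • e) e := by
    filter_upwards [hline0.eventually (hv.eventually (by simp))] with t ht
    exact ((ht.differentiableAt two_ne_zero).hasFDerivAt.comp_hasDerivAt t (hline t)).deriv
  have hF : DifferentiableAt ℝ (fun w => fderiv ℝ v w e) z :=
    ((hv.fderiv_right le_rfl).differentiableAt one_ne_zero).clm_apply
      (differentiableAt_const e)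
  have hsecond : deriv (deriv fun t : ℝ => v (z + t • e)) 0 =
      fderiv ℝ (fun w => fderiv ℝ v w e) z e := by
    rw [hderiv.deriv_eq]
    exact (hF.hasFDerivAt.comp_hasDerivAt_of_eq 0 (hline 0) (by simp)).deriv
  rw [← hsecond]
  have h0 : IsLocalMax v ((fun s : ℝ => z + s • e) 0) := by simpa using h
  exact IsLocalMax.deriv_deriv_nonpos
    (IsLocalMax.comp_continuous (g := fun s : ℝ => z + s • e) h0 (hline 0).continuousAt)
    (hv.continuousAt.comp_of_eq (hline 0).continuousAt (by simp))

theorem fderiv_fderiv_apply_apply {v : E → ℝ} {z : E} (hv : ContDiffAt ℝ 2 v z) (e : E) :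
    fderiv ℝ (fun w => fderiv ℝ v w e) z e = fderiv ℝ (fderiv ℝ v) z e e := by
  rw [fderiv_clm_apply ((hv.fderiv_right le_rfl).differentiableAt one_ne_zero)
    (differentiableAt_const e)]
  simp

end SecondDerivative

theorem laplacian_nonpos_of_isLocalMax {v : ℂ → ℝ} {z : ℂ} (h : IsLocalMax v z)
    (hv : ContDiffAt ℝ 2 v z) : laplacian v z ≤ 0 :=
  add_nonpos (h.fderiv_fderiv_apply_nonpos hv 1) (h.fderiv_fderiv_apply_nonpos hv Complex.I)

theorem laplacian_eq_Laplacian_laplacian {u : ℂ → ℝ} {z : ℂ} (hu : ContDiffAt ℝ 2 u z) :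
    laplacian u z = Laplacian.laplacian u z := by
  simp only [InnerProductSpace.laplacian_eq_iteratedFDeriv_complexPlane, laplacian,
    iteratedFDeriv_two_apply, fderiv_fderiv_apply_apply hu]
  rfl

theorem laplacian_add_smul {u H : ℂ → ℝ} {z : ℂ} (hu : ContDiffAt ℝ 2 u z)
    (hH : ContDiffAt ℝ 2 H z) (ε : ℝ) :
    laplacian (u + ε • H) z = laplacian u z + ε * laplacian H z := by
  have huH : ContDiffAt ℝ 2 (u + ε • H) z := hu.add (hH.const_smul ε)
  rw [laplacian_eq_Laplacian_laplacian hu, laplacian_eq_Laplacian_laplacian hH,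
    laplacian_eq_Laplacian_laplacian huH, hu.laplacian_add (f₂ := ε • H) (hH.const_smul ε),
    InnerProductSpace.laplacian_smul ε hH, smul_eq_mul]

section Gaussian

variable {F : Type*} [NormedAddCommGroup F]

noncomputable def gaussian (α : ℝ) (c w : F) : ℝ := Real.exp (-α * ‖w - c‖ ^ 2)

theorem gaussian_pos (α : ℝ) (c w : F) : 0 < gaussian α c w := Real.exp_pos _

theorem gaussian_eq_of_mem_sphere {α r : ℝ} {c w : F} (hw : w ∈ sphere c r) :
    gaussian α c w = Real.exp (-α * r ^ 2) := by
  rw [gaussian, mem_sphere_iff_norm.mp hw]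

variable [InnerProductSpace ℝ F] (α : ℝ) (c : F)

open scoped RealInnerProductSpace

theorem hasFDerivAt_gaussian (w : F) :
    HasFDerivAt (gaussian α c) ((-2 * α * gaussian α c w) • innerSL ℝ (w - c)) w := by
  refine (((hasFDerivAt_id w).sub_const c).norm_sq.const_mul (-α)).exp.congr_fderiv ?_
  ext e
  simp [gaussian]
  ring

theorem fderiv_gaussian_apply (w e : F) :
    fderiv ℝ (gaussian α c) w e = -2 * α * ⟪w - c, e⟫ * gaussian α c w := by
  rw [(hasFDerivAt_gaussian α c w).fderiv]
  simp only [smul_apply, innerSL_apply_apply, smul_eq_mul]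
  ring

theorem fderiv_fderiv_gaussian_apply (w e : F) :
    fderiv ℝ (fun w => fderiv ℝ (gaussian α c) w e) w e =
      (4 * α ^ 2 * ⟪w - c, e⟫ ^ 2 - 2 * α * ‖e‖ ^ 2) * gaussian α c w := by
  simp_rw [fderiv_gaussian_apply]
  have hd : HasFDerivAt (fun w => -2 * α * ⟪w - c, e⟫ * gaussian α c w) _ w :=
    ((((hasFDerivAt_id w).sub_const c).inner ℝ (hasFDerivAt_const e w)).const_mul
      (-2 * α)).mul (hasFDerivAt_gaussian α c w)
  rw [hd.fderiv]
  simp [inner_sub_left]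
  ring

theorem contDiff_gaussian : ContDiff ℝ 2 (gaussian α c) :=
  (((contDiff_norm_sq ℝ).comp (contDiff_id.sub contDiff_const)).const_smul (-α)).exp

end Gaussian

theorem laplacian_gaussian (α : ℝ) (c z : ℂ) :
    laplacian (gaussian α c) z = (4 * α ^ 2 * ‖z - c‖ ^ 2 - 4 * α) * gaussian α c z := by
  rw [laplacian, fderiv_fderiv_gaussian_apply, fderiv_fderiv_gaussian_apply, Complex.inner,
    Complex.inner]
  simp [Complex.sq_norm, Complex.normSq_apply]
  ring

theorem exists_mul_gaussian_lt_laplacian_gaussian {A R : ℝ} (hA : 0 ≤ A) (hR : 0 < R) (c : ℂ) :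
    ∃ α > 0, ∀ z, R / 2 ≤ ‖z - c‖ → A * gaussian α c z < laplacian (gaussian α c) z := by
  refine ⟨(5 + A * R ^ 2) / R ^ 2, by positivity, fun z hz => ?_⟩
  set α := (5 + A * R ^ 2) / R ^ 2
  have hαR : α * R ^ 2 = 5 + A * R ^ 2 := div_mul_cancel₀ _ (by positivity)
  have hr : R ^ 2 / 4 ≤ ‖z - c‖ ^ 2 := by nlinarith
  rw [laplacian_gaussian]
  refine mul_lt_mul_of_pos_right ?_ (gaussian_pos α c z)
  calc A < α + A * (α * R ^ 2) := by rw [hαR]; nlinarith [mul_nonneg hA (sq_nonneg R)]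
    _ = α ^ 2 * R ^ 2 - 4 * α := by linear_combination (-α) * hαR
    _ ≤ 4 * α ^ 2 * ‖z - c‖ ^ 2 - 4 * α := by nlinarith

theorem IsCompact.forall_le_of_laplacian_pos {v : ℂ → ℝ} {K U : Set ℂ} {M : ℝ}
    (hK : IsCompact K) (hU : IsOpen U) (hUK : U ⊆ K) (hvK : ContinuousOn v K)
    (hvU : ∀ z ∈ U, ContDiffAt ℝ 2 v z) (hlap : ∀ z ∈ U, M < v z → 0 < laplacian v z)
    (hbdry : ∀ z ∈ K \ U, v z ≤ M) : ∀ z ∈ K, v z ≤ M := by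
  intro z hz
  by_contra! hz_gt
  obtain ⟨q, hqK, hqmax⟩ := hK.exists_isMaxOn ⟨z, hz⟩ hvK
  have hq_gt : M < v q := hz_gt.trans_le (hqmax hz)
  have hqU : q ∈ U := by_contra fun hqU => (hbdry q ⟨hqK, hqU⟩).not_gt hq_gt
  have hlocal : IsLocalMax v q := hqmax.isLocalMax (mem_of_superset (hU.mem_nhds hqU) hUK)
  exact (laplacian_nonpos_of_isLocalMax hlocal (hvU q hqU)).not_gt (hlap q hqU hq_gt)

theorem segment_subset_closedBall_sdiff_ball {E : Type*} [NormedAddCommGroup E]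
    [NormedSpace ℝ E] {c p : E} {R : ℝ} (hp : p ∈ sphere c R) :
    segment ℝ p (p + (1 / 2 : ℝ) • (c - p)) ⊆ closedBall c R \ ball c (R / 2) := by
  rw [segment_eq_image']
  rintro _ ⟨θ, ⟨hθ0, hθ1⟩, rfl⟩
  have hdist : dist (p + θ • (p + (1 / 2 : ℝ) • (c - p) - p)) c = (1 - θ / 2) * R := by
    rw [dist_eq_norm, ← mem_sphere_iff_norm.mp hp,
      show p + θ • (p + (1 / 2 : ℝ) • (c - p) - p) - c = (1 - θ / 2) • (p - c) by module,
      norm_smul, Real.norm_of_nonneg (by linarith)]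
  have hR : 0 ≤ R := by simpa using dist_nonneg.trans_eq (mem_sphere.mp hp)
  simp only [Set.mem_sdiff, mem_closedBall, mem_ball, not_lt, hdist]
  constructor <;> nlinarith

theorem add_mul_gaussian_le_of_mem_annulus {u : ℂ → ℝ} {A R α ε : ℝ} {c : ℂ} (hA : 0 ≤ A)
    (hε : 0 < ε) (hu : ∀ z ∈ closedBall c R, ContDiffAt ℝ 2 u z)
    (hineq : ∀ z ∈ ball c R, A * u z ≤ laplacian u z)
    (hαA : ∀ z, R / 2 ≤ ‖z - c‖ → A * gaussian α c z < laplacian (gaussian α c) z)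
    (hinner : ∀ z ∈ sphere c (R / 2), u z + ε * gaussian α c z ≤ 0)
    (houter : ∀ z ∈ sphere c R, u z ≤ 0) :
    ∀ z ∈ closedBall c R \ ball c (R / 2),
      u z + ε * gaussian α c z ≤ ε * Real.exp (-α * R ^ 2) := by
  have hM : 0 < ε * Real.exp (-α * R ^ 2) := by positivity
  have hcont : ContinuousOn u (closedBall c R) := fun z hz =>
    (hu z hz).continuousAt.continuousWithinAt
  refine ((isCompact_closedBall c R).diff isOpen_ball).forall_le_of_laplacian_pos
    (v := u + ε • gaussian α c) (isOpen_ball.sdiff isClosed_closedBall)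
    (sdiff_subset_sdiff ball_subset_closedBall ball_subset_closedBall)
    ((hcont.mono sdiff_subset).add ((contDiff_gaussian α c).continuous.continuousOn.const_smul ε))
    (fun z hz => (hu z (ball_subset_closedBall hz.1)).add
      ((contDiff_gaussian α c).contDiffAt.const_smul ε)) (fun z hz hvz => ?_) ?_
  · have hz_far : R / 2 ≤ ‖z - c‖ := (lt_of_not_ge hz.2).le.trans_eq (dist_eq_norm z c)
    have hvz : 0 < u z + ε * gaussian α c z := hM.trans hvz
    rw [laplacian_add_smul (hu z (ball_subset_closedBall hz.1))
      (contDiff_gaussian α c).contDiffAt]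
    calc 0 ≤ A * (u z + ε * gaussian α c z) := mul_nonneg hA hvz.le
      _ = A * u z + ε * (A * gaussian α c z) := by ring
      _ < laplacian u z + ε * laplacian (gaussian α c) z :=
        add_lt_add_of_le_of_lt (hineq z hz.1) (mul_lt_mul_of_pos_left (hαA z hz_far) hε)
  · rintro z ⟨⟨hzR, hzR2⟩, hzU⟩
    by_cases hz : z ∈ ball c R
    · have hz2 : z ∈ sphere c (R / 2) := mem_sphere.mpr <| le_antisymm
        (mem_closedBall.mp (not_not.mp fun h => hzU ⟨hz, h⟩)) (not_lt.mp hzR2)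
      exact (hinner z hz2).trans hM.le
    · have hz2 : z ∈ sphere c R := mem_sphere.mpr (le_antisymm hzR (not_lt.mp hz))
      change u z + ε * gaussian α c z ≤ _
      rw [gaussian_eq_of_mem_sphere hz2]
      linarith [houter z hz2]

open scoped RealInnerProductSpace in
theorem hopf_lemma {u : ℂ → ℝ} {A R : ℝ} {c p : ℂ} (hA : 0 ≤ A) (hR : 0 < R)
    (hu : ∀ z ∈ closedBall c R, ContDiffAt ℝ 2 u z)
    (hineq : ∀ z ∈ ball c R, A * u z ≤ laplacian u z)
    (hneg : ∀ z ∈ ball c R, u z < 0) (hle : ∀ z ∈ sphere c R, u z ≤ 0)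
    (hp : p ∈ sphere c R) (hp0 : u p = 0) :
    fderiv ℝ u p (c - p) < 0 := by
  obtain ⟨α, hα, hαA⟩ := exists_mul_gaussian_lt_laplacian_gaussian hA hR c
  obtain ⟨w₀, hw₀, hw₀max⟩ := (isCompact_sphere c (R / 2)).exists_isMaxOn
    (NormedSpace.sphere_nonempty.mpr (by positivity)) fun z hz =>
      (hu z (sphere_subset_closedBall.trans (closedBall_subset_closedBall (by linarith)) hz)
        ).continuousAt.continuousWithinAt
  have hw₀neg : u w₀ < 0 := hneg w₀ (sphere_subset_ball (by linarith) hw₀)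
  set ε := -u w₀ / Real.exp (-α * (R / 2) ^ 2)
  have hε : 0 < ε := div_pos (neg_pos.mpr hw₀neg) (Real.exp_pos _)
  have hinner : ∀ z ∈ sphere c (R / 2), u z + ε * gaussian α c z ≤ 0 := fun z hz => by
    rw [gaussian_eq_of_mem_sphere hz, div_mul_cancel₀ _ (Real.exp_pos _).ne']
    linarith [show u z ≤ u w₀ from hw₀max hz]
  have hvmax : IsMaxOn (u + ε • gaussian α c) (closedBall c R \ ball c (R / 2)) p := by
    intro z hz
    have hvp : u p + ε * gaussian α c p = ε * Real.exp (-α * R ^ 2) := by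
      rw [hp0, gaussian_eq_of_mem_sphere hp, zero_add]
    exact (add_mul_gaussian_le_of_mem_annulus hA hε hu hineq hαA hinner hle z hz).trans hvp.ge
  have hv_deriv : HasFDerivAt (u + ε • gaussian α c)
      (fderiv ℝ u p + ε • (-2 * α * gaussian α c p) • innerSL ℝ (p - c)) p :=
    ((hu p (sphere_subset_closedBall hp)).differentiableAt two_ne_zero).hasFDerivAt.add
      ((hasFDerivAt_gaussian α c p).const_smul ε)
  have key := hvmax.localize.hasFDerivWithinAt_nonpos hv_deriv.hasFDerivWithinAt
    (mem_posTangentConeAt_of_segment_subset (segment_subset_closedBall_sdiff_ball hp))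
  have hpc : ⟪p - c, c - p⟫ = -R ^ 2 := by
    rw [← neg_sub p c, inner_neg_right, real_inner_self_eq_norm_sq, mem_sphere_iff_norm.mp hp]
  simp only [add_apply, smul_apply, map_smul, innerSL_apply_apply, smul_eq_mul, hpc] at key
  nlinarith [mul_pos (mul_pos (mul_pos hε hα) (gaussian_pos α c p)) (pow_pos hR 2)]

theorem eventually_eq_zero_of_eq_zero {V : Set ℂ} (hV : IsOpen V) {u : ℂ → ℝ}
    (hu : ContDiffOn ℝ 2 u V) (hle : ∀ z ∈ V, u z ≤ 0) {A : ℝ} (hA : 0 ≤ A)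
    (hineq : ∀ z ∈ V, A * u z ≤ laplacian u z) {z₀ : ℂ} (hz₀ : z₀ ∈ V) (hz₀0 : u z₀ = 0) :
    ∀ᶠ z in 𝓝 z₀, u z = 0 := by
  obtain ⟨ρ, hρ, hρV⟩ := nhds_basis_closedBall.mem_iff.mp (hV.mem_nhds hz₀)
  filter_upwards [ball_mem_nhds z₀ (half_pos hρ)] with z hz
  by_contra hz0
  set K := closedBall z₀ ρ ∩ u ⁻¹' {0}
  have hz₀K : z₀ ∈ K := ⟨mem_closedBall_self hρ.le, hz₀0⟩
  have hKclosed : IsClosed K :=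
    (hu.continuousOn.mono hρV).preimage_isClosed_of_isClosed isClosed_closedBall
      isClosed_singleton
  -- `p` is a zero of `u` nearest to `z`, so `u < 0` on the ball about `z` through `p`.
  obtain ⟨p, hpK, hpz⟩ := hKclosed.exists_infDist_eq_dist ⟨z₀, hz₀K⟩ z
  set R := infDist z K
  have hRpos : 0 < R := (hKclosed.notMem_iff_infDist_pos ⟨z₀, hz₀K⟩).mp fun h => hz0 h.2
  have hballρ : closedBall z R ⊆ closedBall z₀ ρ := closedBall_subset_closedBall' <| by
    linarith [infDist_le_dist_of_mem hz₀K (x := z), mem_ball.mp hz]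
  have hball : closedBall z R ⊆ V := hballρ.trans hρV
  have hp : p ∈ sphere z R := by rw [mem_sphere, dist_comm, hpz]
  have hneg : ∀ w ∈ ball z R, u w < 0 := fun w hw =>
    (hle w (hball (ball_subset_closedBall hw))).lt_of_ne fun h =>
      ball_infDist_subset_compl hw ⟨hballρ (ball_subset_closedBall hw), h⟩
  have hpmax : IsLocalMax u p := by
    filter_upwards [hV.mem_nhds (hball (sphere_subset_closedBall hp))] with w hw
    exact (hle w hw).trans hpK.2.ge
  have hderiv := hopf_lemma hA hRpos (fun w hw => hu.contDiffAt (hV.mem_nhds (hball hw)))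
    (fun w hw => hineq w (hball (ball_subset_closedBall hw))) hneg
    (fun w hw => hle w (hball (sphere_subset_closedBall hw))) hp hpK.2
  simp [hpmax.fderiv_eq_zero] at hderiv

/-- Minda's strong maximum principle: if `u ≤ 0` is C² on a domain `V ⊆ ℂ` and
satisfies `Δu ≥ A·u` for a constant `A > 0`, then either `u ≡ 0` on `V` or `u < 0`
everywhere on `V`. -/
theorem minda_dichotomy (V : Set ℂ) (hV : IsOpen V) (hVconn : IsConnected V)
    (u : ℂ → ℝ) (hu : ContDiffOn ℝ 2 u V)
    (hle : ∀ z ∈ V, u z ≤ 0)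
    (A : ℝ) (hA : 0 < A)
    (hineq : ∀ z ∈ V, A * u z ≤ laplacian u z) :
    (∀ z ∈ V, u z = 0) ∨ (∀ z ∈ V, u z < 0) := by
  have hzero : IsOpen {z ∈ V | u z = 0} := isOpen_iff_mem_nhds.mpr fun z hz =>
    Eventually.and (hV.mem_nhds hz.1)
      (eventually_eq_zero_of_eq_zero hV hu hle hA.le hineq hz.1 hz.2)
  have hneg : IsOpen {z ∈ V | u z < 0} := hu.continuousOn.isOpen_inter_preimage hV isOpen_Iio
  have hcover : V ⊆ {z ∈ V | u z = 0} ∪ {z ∈ V | u z < 0} := fun z hz =>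
    (hle z hz).lt_or_eq.elim (fun h => Or.inr ⟨hz, h⟩) (fun h => Or.inl ⟨hz, h⟩)
  have hdisj : Disjoint {z ∈ V | u z = 0} {z ∈ V | u z < 0} :=
    disjoint_left.mpr fun z h₀ hneg => hneg.2.ne h₀.2
  rcases hVconn.isPreconnected.subset_or_subset hzero hneg hdisj hcover with h | h
  · exact Or.inl fun z hz => (h hz).2
  · exact Or.inr fun z hz => (h hz).2
end

section
/- Let M be a complete Riemannian manifold with sectional curvature bounded below, and let w : M → ℝ be a bounded C² function satisfying Δw ≥ 2(e^w - 1) on the open set {w > 0}. If additionally {w > 0} is nonempty and sup w > 0, then applying the Omori–Yau maximum principle along a sequence (y_n) with w(y_n) → sup w and limsup Δw(y_n) ≤ 0 yields the contradiction 0 ≥ 2(e^{sup w} - 1) > 0; hence w ≤ 0 everywhere. -/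
open Filter Topology

/-- Omori–Yau argument: on a complete manifold with curvature bounded below (abstracted
here by the hypothesis `hOY`, the conclusion of the Omori–Yau maximum principle applied
to the bounded function `w`), a bounded function `w` satisfying `Δw ≥ 2(e^w - 1)` on
`{w > 0}` must satisfy `w ≤ 0` everywhere. -/
theorem nonpos_of_omori_yau
    {M : Type*} [Nonempty M] (Δ : (M → ℝ) → M → ℝ) (w : M → ℝ)
    (hbdd : BddAbove (Set.range w))
    (hineq : ∀ x : M, 0 < w x → 2 * (Real.exp (w x) - 1) ≤ Δ w x)
    (hOY : ∃ x : ℕ → M,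
      Tendsto (fun n => w (x n)) atTop (𝓝 (⨆ y : M, w y)) ∧
      ∀ ε : ℝ, 0 < ε → ∀ᶠ n in atTop, Δ w (x n) ≤ ε) :
    ∀ x : M, w x ≤ 0 := by
  set S := ⨆ y : M, w y with hS
  by_cases hSpos : 0 < S
  · exfalso
    obtain ⟨x, hx, hε⟩ := hOY
    have hεpos : (0:ℝ) < Real.exp (S/2) - 1 := by
      have : (1:ℝ) < Real.exp (S/2) := by nlinarith [Real.add_one_le_exp (S/2)]
      linarith
    have h1 : ∀ᶠ n in atTop, S/2 < w (x n) :=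
      hx.eventually (eventually_gt_nhds (by linarith))
    have h2 := hε (Real.exp (S/2) - 1) hεpos
    obtain ⟨n, hn1, hn2⟩ := (h1.and h2).exists
    have hwx : 0 < w (x n) := by linarith
    have h3 := hineq (x n) hwx
    have h4 : Real.exp (S/2) ≤ Real.exp (w (x n)) := Real.exp_le_exp.mpr (le_of_lt hn1)
    nlinarith [Real.exp_pos (S/2)]
  · intro x
    have : w x ≤ S := le_ciSup hbdd x
    linarith [not_lt.mp hSpos]
end
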